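/- In SO_{2d+1}(ℚ_p), let ṡ_1,…,ṡ_{d-1} be diag(E_{i-1}, S_1, E_{d-i-1}, E_{i-1}, S_1, E_{d-i-1}, 1) with S_1 = ((0,1),(1,0)), let ṡ_d be the matrix exchanging basis vectors e_d and e_{2d}, with entry −1 at position (2d+1, 2d+1) and identity elsewhere; let u̇ have entry p^{-1} at (1,d+1), p at (d+1,1), −1 at (2d+1,2d+1), identity elsewhere, and ṡ_0 = u̇ ṡ_1 u̇. Define φ = ṡ_1 ṡ_2 ⋯ ṡ_{d-1} ṡ_d ṡ_{d-1} ⋯ ṡ_2 ṡ_0. Then φ² = diag(p², E_{d-1}, p^{-2}, E_{d-1}, 1). -/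

import Mathlib

noncomputable section

open Matrix

/-- the lift `ṡ_i ∈ SO_{2d+1}(ℚ_p)`, `1 ≤ i ≤ d-1`:
`diag(E_{i-1}, S_1, E_{d-i-1}, E_{i-1}, S_1, E_{d-i-1}, 1)` with `S_1 = ((0,1),(1,0))`. -/
def sB (p : ℕ) [Fact p.Prime] (d i : ℕ) : Matrix (Fin (2 * d + 1)) (Fin (2 * d + 1)) ℚ_[p] :=
  Matrix.of fun a b =>
    if (a.val = i - 1 ∧ b.val = i) ∨ (a.val = i ∧ b.val = i - 1)
        ∨ (a.val = d + i - 1 ∧ b.val = d + i) ∨ (a.val = d + i ∧ b.val = d + i - 1) then 1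
    else if a = b ∧ a.val ≠ i - 1 ∧ a.val ≠ i ∧ a.val ≠ d + i - 1 ∧ a.val ≠ d + i then 1
    else 0

/-- the lift `ṡ_d`: exchanges `e_d` and `e_{2d}`, entry `-1` at `(2d+1, 2d+1)` (1-indexed),
identity elsewhere. -/
def sBd (p : ℕ) [Fact p.Prime] (d : ℕ) : Matrix (Fin (2 * d + 1)) (Fin (2 * d + 1)) ℚ_[p] :=
  Matrix.of fun a b =>
    if (a.val = d - 1 ∧ b.val = 2 * d - 1) ∨ (a.val = 2 * d - 1 ∧ b.val = d - 1) then 1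
    else if a.val = 2 * d ∧ b.val = 2 * d then -1
    else if a = b ∧ a.val ≠ d - 1 ∧ a.val ≠ 2 * d - 1 ∧ a.val ≠ 2 * d then 1
    else 0

/-- the element `u̇ ∈ SO_{2d+1}(ℚ_p)`: entry `p⁻¹` at `(1, d+1)`, `p` at `(d+1, 1)`,
`-1` at `(2d+1, 2d+1)` (1-indexed), identity elsewhere. -/
def uB (p : ℕ) [Fact p.Prime] (d : ℕ) : Matrix (Fin (2 * d + 1)) (Fin (2 * d + 1)) ℚ_[p] :=
  Matrix.of fun a b =>
    if a.val = 0 ∧ b.val = d then (p : ℚ_[p])⁻¹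
    else if a.val = d ∧ b.val = 0 then (p : ℚ_[p])
    else if a.val = 2 * d ∧ b.val = 2 * d then -1
    else if a = b ∧ a.val ≠ 0 ∧ a.val ≠ d ∧ a.val ≠ 2 * d then 1
    else 0

/-- `ṡ_0 = u̇ ṡ_1 u̇`. -/
def sB0 (p : ℕ) [Fact p.Prime] (d : ℕ) : Matrix (Fin (2 * d + 1)) (Fin (2 * d + 1)) ℚ_[p] :=
  uB p d * sB p d 1 * uB p d

/-- `φ = ṡ_1 ṡ_2 ⋯ ṡ_{d-1} ṡ_d ṡ_{d-1} ⋯ ṡ_2 ṡ_0`. -/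
def phiB (p : ℕ) [Fact p.Prime] (d : ℕ) : Matrix (Fin (2 * d + 1)) (Fin (2 * d + 1)) ℚ_[p] :=
  ((List.range (d - 1)).map (fun j => sB p d (j + 1))).prod * sBd p d
    * ((List.range (d - 2)).map (fun j => sB p d (d - 1 - j))).prod * sB0 p d

/-! All matrices involved are monomial (one nonzero entry per column), so their products are
computed by composing the underlying permutations of the (0-based) indices and multiplying the
weights. The lifts `ṡ_1, …, ṡ_{d-1}` permute both halves `{0, …, d-1}` and `{d, …, 2d-1}` in
the same way, so `ṡ_1 ⋯ ṡ_{d-1}` and `ṡ_{d-1} ⋯ ṡ_2` are cycles on each half, and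
`ṡ_1 ⋯ ṡ_{d-1} ṡ_d ṡ_{d-1} ⋯ ṡ_2` is the 4-cycle `0 → 1 → d → d+1 → 0` with sign `-1` at `2d`.
Since `ṡ_0 = (0 d+1)(1 d)` with weights `p` at `0, 1` and `p⁻¹` at `d, d+1`, the element `φ`
is the transposition `(1 d+1)` with weights `p, p, p⁻¹, p⁻¹` at `0, 1, d, d+1` and `-1` at `2d`,
and `φ²` is the diagonal matrix of the products `w (φ m) * w m`. -/

section MonomialMatrix

variable {R : Type*} [Semiring R]

/-- `f` and `w` are only read on `{0, …, N - 1}`, which lets the permutations below be written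
as plain `ℕ`-valued case distinctions. -/
def monomialMatrix (N : ℕ) (f : ℕ → ℕ) (w : ℕ → R) : Matrix (Fin N) (Fin N) R :=
  Matrix.of fun a b => if a.val = f b.val then w b.val else 0

theorem monomialMatrix_mul (N : ℕ) (f g : ℕ → ℕ) (w v : ℕ → R) (hg : ∀ m < N, g m < N) :
    monomialMatrix N f w * monomialMatrix N g v =
      monomialMatrix N (fun m => f (g m)) (fun m => w (g m) * v m) := by
  ext a b
  rw [Matrix.mul_apply, Finset.sum_eq_single (⟨g b, hg b b.isLt⟩ : Fin N)]
  · by_cases h : a.val = f (g b) <;> simp [monomialMatrix, h]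
  · intro c _ hc
    have h : c.val ≠ g b := fun h => hc (Fin.ext h)
    simp [monomialMatrix, h]
  · simp

theorem monomialMatrix_congr (N : ℕ) {f f' : ℕ → ℕ} {w w' : ℕ → R}
    (hf : ∀ m < N, f m = f' m) (hw : ∀ m < N, w m = w' m) :
    monomialMatrix N f w = monomialMatrix N f' w' := by
  ext a b
  simp only [monomialMatrix, Matrix.of_apply, hf b b.isLt, hw b b.isLt]

theorem monomialMatrix_eq_diagonal (N : ℕ) {f : ℕ → ℕ} (w : ℕ → R) (hf : ∀ m < N, f m = m) :
    monomialMatrix N f w = Matrix.diagonal fun i => w i.val := by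
  ext a b
  by_cases h : a = b
  · simp [monomialMatrix, h, hf b b.isLt]
  · simp [monomialMatrix, h, hf b b.isLt, Fin.val_ne_of_ne h]

end MonomialMatrix

def doubledPerm (d : ℕ) (σ : ℕ → ℕ) (m : ℕ) : ℕ :=
  if m < d then σ m else if m < 2 * d then σ (m - d) + d else m

theorem doubledPerm_lt {d : ℕ} {σ : ℕ → ℕ} (hσ : ∀ m < d, σ m < d) :
    ∀ m < 2 * d + 1, doubledPerm d σ m < 2 * d + 1 := by
  intro m hm
  unfold doubledPerm
  split_ifs with h₁ h₂
  · linarith [hσ m h₁]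
  · linarith [hσ (m - d) (by omega)]
  · exact hm

theorem doubledPerm_comp {d : ℕ} {σ τ : ℕ → ℕ} (hτ : ∀ m < d, τ m < d) (m : ℕ) :
    doubledPerm d σ (doubledPerm d τ m) = doubledPerm d (fun m => σ (τ m)) m := by
  unfold doubledPerm
  by_cases h₁ : m < d
  · simp [h₁, hτ m h₁]
  by_cases h₂ : m < 2 * d
  · simp [h₁, h₂, show τ (m - d) + d < 2 * d by linarith [hτ (m - d) (by omega)]]
  · simp [h₁, h₂]

theorem swap_apply_lt {d i j : ℕ} (hi : i < d) (hj : j < d) :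
    ∀ m < d, Equiv.swap i j m < d := by
  intro m hm
  rw [Equiv.swap_apply_def]
  split_ifs <;> omega

def ascCycle (k m : ℕ) : ℕ :=
  if m < k then m + 1 else if m = k then 0 else m

def descCycle (n k m : ℕ) : ℕ :=
  if m + k = n then n else if n < m + k ∧ m ≤ n then m - 1 else m

theorem descCycle_lt {n k d : ℕ} (hn : n < d) : ∀ m < d, descCycle n k m < d := by
  intro m hm
  unfold descCycle
  split_ifs <;> omega

theorem ascCycle_succ (k : ℕ) :
    (fun m => ascCycle k (Equiv.swap k (k + 1) m)) = ascCycle (k + 1) := by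
  funext m
  unfold ascCycle
  rw [Equiv.swap_apply_def]
  split_ifs <;> omega

theorem descCycle_succ {n k : ℕ} (hk : k < n) :
    (fun m => descCycle n k (Equiv.swap (n - (k + 1)) (n - k) m)) = descCycle n (k + 1) := by
  funext m
  unfold descCycle
  rw [Equiv.swap_apply_def]
  split_ifs <;> omega

theorem sB_eq_monomialMatrix (p : ℕ) [Fact p.Prime] {d i : ℕ} (hi : 1 ≤ i) (hid : i < d) :
    sB p d i = monomialMatrix (2 * d + 1) (doubledPerm d (Equiv.swap (i - 1) i)) 1 := by
  ext a b
  simp only [sB, monomialMatrix, doubledPerm, Equiv.swap_apply_def, Matrix.of_apply,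
    Fin.ext_iff, Pi.one_apply]
  split_ifs <;> first | rfl | omega

theorem prod_sB_asc (p : ℕ) [Fact p.Prime] {d k : ℕ} (hk : k < d) :
    ((List.range k).map fun j => sB p d (j + 1)).prod =
      monomialMatrix (2 * d + 1) (doubledPerm d (ascCycle k)) 1 := by
  induction k with
  | zero =>
    rw [List.range_zero, List.map_nil, List.prod_nil, monomialMatrix_eq_diagonal _ _ fun m _ => ?_]
    · exact Matrix.diagonal_one
    · grind [doubledPerm, ascCycle]
  | succ k ih =>
    rw [List.range_succ, List.map_append, List.prod_append, ih (by omega), List.map_singleton,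
      List.prod_singleton, sB_eq_monomialMatrix p le_add_self hk,
      monomialMatrix_mul _ _ _ _ _ (doubledPerm_lt (swap_apply_lt (by omega) hk))]
    refine monomialMatrix_congr _ (fun m _ => ?_) fun _ _ => mul_one 1
    rw [doubledPerm_comp (swap_apply_lt (by omega) hk), Nat.add_sub_cancel, ascCycle_succ]

theorem prod_sB_desc (p : ℕ) [Fact p.Prime] {d k : ℕ} (hk : k + 1 < d) :
    ((List.range k).map fun j => sB p d (d - 1 - j)).prod =
      monomialMatrix (2 * d + 1) (doubledPerm d (descCycle (d - 1) k)) 1 := by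
  induction k with
  | zero =>
    rw [List.range_zero, List.map_nil, List.prod_nil, monomialMatrix_eq_diagonal _ _ fun m _ => ?_]
    · exact Matrix.diagonal_one
    · grind [doubledPerm, descCycle]
  | succ k ih =>
    have hi : d - 1 - k < d := by omega
    rw [List.range_succ, List.map_append, List.prod_append, ih (by omega), List.map_singleton,
      List.prod_singleton, sB_eq_monomialMatrix p (by omega) hi,
      monomialMatrix_mul _ _ _ _ _ (doubledPerm_lt (swap_apply_lt (by omega) hi))]
    refine monomialMatrix_congr _ (fun m _ => ?_) fun _ _ => mul_one 1
    rw [doubledPerm_comp (swap_apply_lt (by omega) hi), Nat.sub_sub, descCycle_succ (by omega)]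

def sdWeight (p : ℕ) [Fact p.Prime] (d m : ℕ) : ℚ_[p] :=
  if m = 2 * d then -1 else 1

def uWeight (p : ℕ) [Fact p.Prime] (d m : ℕ) : ℚ_[p] :=
  if m = 0 then (p : ℚ_[p]) else if m = d then (p : ℚ_[p])⁻¹ else if m = 2 * d then -1 else 1

def s0Weight (p : ℕ) [Fact p.Prime] (d m : ℕ) : ℚ_[p] :=
  if m = 0 ∨ m = 1 then (p : ℚ_[p]) else if m = d ∨ m = d + 1 then (p : ℚ_[p])⁻¹ else 1

def phiWeight (p : ℕ) [Fact p.Prime] (d m : ℕ) : ℚ_[p] :=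
  if m = 0 ∨ m = 1 then (p : ℚ_[p]) else if m = d ∨ m = d + 1 then (p : ℚ_[p])⁻¹
  else if m = 2 * d then -1 else 1

def psiPerm (d m : ℕ) : ℕ :=
  if m = 0 then 1 else if m = 1 then d else if m = d then d + 1 else if m = d + 1 then 0 else m

theorem sBd_eq_monomialMatrix (p : ℕ) [Fact p.Prime] {d : ℕ} (hd : 1 ≤ d) :
    sBd p d = monomialMatrix (2 * d + 1) (Equiv.swap (d - 1) (2 * d - 1)) (sdWeight p d) := by
  ext a b
  simp only [sBd, monomialMatrix, sdWeight, Equiv.swap_apply_def, Matrix.of_apply, Fin.ext_iff]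
  split_ifs <;> first | rfl | omega

theorem uB_eq_monomialMatrix (p : ℕ) [Fact p.Prime] {d : ℕ} (hd : 1 ≤ d) :
    uB p d = monomialMatrix (2 * d + 1) (Equiv.swap 0 d) (uWeight p d) := by
  ext a b
  simp only [uB, monomialMatrix, uWeight, Equiv.swap_apply_def, Matrix.of_apply, Fin.ext_iff]
  split_ifs <;> first | rfl | omega

theorem sB0_eq_monomialMatrix (p : ℕ) [Fact p.Prime] {d : ℕ} (hd : 2 ≤ d) :
    sB0 p d = monomialMatrix (2 * d + 1) ⇑(Equiv.swap 0 (d + 1) * Equiv.swap 1 d : Equiv.Perm ℕ)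
      (s0Weight p d) := by
  rw [sB0, uB_eq_monomialMatrix p (by omega), sB_eq_monomialMatrix p le_rfl (by omega),
    monomialMatrix_mul _ _ _ _ _ (doubledPerm_lt (swap_apply_lt (by omega) (by omega))),
    monomialMatrix_mul _ _ _ _ _ (swap_apply_lt (by omega) (by omega))]
  refine monomialMatrix_congr _ (fun m _ => ?_) fun m _ => ?_
  · grind [Equiv.Perm.mul_apply, doubledPerm]
  · simp only [Pi.one_apply, mul_one]
    grind (splits := 30) [doubledPerm, uWeight, s0Weight]

theorem prod_sB_mul_sBd_mul_prod_sB (p : ℕ) [Fact p.Prime] {d : ℕ} (hd : 3 ≤ d) :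
    ((List.range (d - 1)).map fun j => sB p d (j + 1)).prod * sBd p d
        * ((List.range (d - 2)).map fun j => sB p d (d - 1 - j)).prod =
      monomialMatrix (2 * d + 1) (psiPerm d) (sdWeight p d) := by
  rw [prod_sB_asc p (by omega), sBd_eq_monomialMatrix p (by omega), prod_sB_desc p (by omega),
    monomialMatrix_mul _ _ _ _ _ (swap_apply_lt (by omega) (by omega)),
    monomialMatrix_mul _ _ _ _ _ (doubledPerm_lt (descCycle_lt (by omega)))]
  refine monomialMatrix_congr _ (fun m _ => ?_) fun m _ => ?_
  · grind (splits := 30) [doubledPerm, ascCycle, descCycle, psiPerm]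
  · simp only [Pi.one_apply, one_mul, mul_one]
    grind [doubledPerm, descCycle, sdWeight]

theorem phiB_eq_monomialMatrix (p : ℕ) [Fact p.Prime] {d : ℕ} (hd : 3 ≤ d) :
    phiB p d = monomialMatrix (2 * d + 1) (Equiv.swap 1 (d + 1)) (phiWeight p d) := by
  rw [phiB, prod_sB_mul_sBd_mul_prod_sB p hd, sB0_eq_monomialMatrix p (by omega),
    monomialMatrix_mul _ _ _ _ _ fun m _ => by grind [Equiv.Perm.mul_apply]]
  refine monomialMatrix_congr _ (fun m _ => ?_) fun m _ => ?_
  · grind [Equiv.Perm.mul_apply, psiPerm]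
  · grind [Equiv.Perm.mul_apply, sdWeight, s0Weight, phiWeight]

/-- `φ² = diag(p², E_{d-1}, p⁻², E_{d-1}, 1)`. -/
theorem stmt_11 (p d : ℕ) [Fact p.Prime] (hd : 3 ≤ d) :
    phiB p d ^ 2 =
      Matrix.diagonal (fun i : Fin (2 * d + 1) =>
        if i.val = 0 then (p : ℚ_[p]) ^ 2
        else if i.val = d then ((p : ℚ_[p]) ^ 2)⁻¹ else 1) := by
  have hp : (p : ℚ_[p]) ≠ 0 := Nat.cast_ne_zero.mpr (Fact.out : p.Prime).ne_zero
  rw [sq, phiB_eq_monomialMatrix p hd,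
    monomialMatrix_mul _ _ _ _ _ (swap_apply_lt (by omega) (by omega)),
    monomialMatrix_eq_diagonal _ _ fun m _ => Equiv.swap_apply_self _ _ _]
  congr 1
  funext i
  grind [phiWeight]

end
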